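/- arXiv:1412.4396 — 5 statements merged into one kernel-verified Lean document; each statement's English description precedes it below -/
import Mathlib

section
/- The exponential map is injective on the set of Hermitian n×n complex matrices. -/
open Matrix

theorem NormedSpace.exp_injOn_isSelfAdjoint {A : Type*} [NormedRing A] [StarRing A]
    [NormedAlgebra ℝ A] [ContinuousFunctionalCalculus ℝ A IsSelfAdjoint] :
    Set.InjOn NormedSpace.exp {a : A | IsSelfAdjoint a} :=
  Set.LeftInvOn.injOn fun a ha => CFC.log_exp a ha

/-- The matrix exponential is injective on Hermitian matrices. -/
theorem exp_injective_on_hermitian (n : ℕ)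
    (X Y : Matrix (Fin n) (Fin n) ℂ)
    (hX : X.IsHermitian) (hY : Y.IsHermitian)
    (h : NormedSpace.exp X = NormedSpace.exp Y) : X = Y := by
  -- Matrices are a C⋆-algebra, and so have a continuous functional calculus, only under the
  -- L² operator norm.
  open scoped Matrix.Norms.L2Operator in
  exact NormedSpace.exp_injOn_isSelfAdjoint hX hY h
end

section
/- If g ∈ GL(n,ℂ) satisfies (g*)g = g(g*) (i.e., g is normal) and f_t is the polar deformation retraction, then the whole path t ↦ f_t(g) consists of normal matrices. -/
/-!
Since `g` is normal it commutes with `gᴴ g = exp (2X)`, hence with `X = ½ log (exp (2X))`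
(functional calculus), hence with every `exp (-tX)`; so does `gᴴ`. A normal matrix times a
Hermitian matrix commuting with it and its adjoint is again normal.
-/

open Matrix

theorem IsSelfAdjoint.commute_of_exp_commute {A : Type*} [NormedRing A] [StarRing A]
    [NormedAlgebra ℝ A] [ContinuousFunctionalCalculus ℝ A IsSelfAdjoint] [IsTopologicalRing A]
    [T2Space A] {a b : A} (ha : IsSelfAdjoint a) (h : Commute (NormedSpace.exp a) b) :
    Commute a b :=
  CFC.log_exp a ha ▸ h.cfc_real Real.log

theorem IsStarNormal.mul_of_commute_isSelfAdjoint {R : Type*} [Semiring R] [StarRing R]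
    {a b : R} (ha : IsStarNormal a) (hb : IsSelfAdjoint b) (hab : Commute a b)
    (hab' : Commute (star a) b) : IsStarNormal (a * b) := by
  refine ⟨?_⟩
  rw [star_mul, hb.star_eq]
  exact (hab.symm.mul_right (.refl b)).mul_left (ha.star_comm_self.mul_right hab')

section
open scoped Matrix.Norms.L2Operator

theorem Matrix.IsHermitian.commute_of_exp_commute {n : Type*} [Fintype n] [DecidableEq n]
    {X g : Matrix n n ℂ} (hX : X.IsHermitian) (h : Commute (NormedSpace.exp X) g) :
    Commute X g :=
  IsSelfAdjoint.commute_of_exp_commute hX.isSelfAdjoint h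

end

theorem polar_retraction_preserves_normal_general (n : ℕ)
    (g X : Matrix (Fin n) (Fin n) ℂ)
    (hnormal : gᴴ * g = g * gᴴ)
    (hX : X.IsHermitian) (hgX : gᴴ * g = NormedSpace.exp ((2 : ℂ) • X)) :
    ∀ t ∈ Set.Icc (0:ℝ) 1,
      (g * NormedSpace.exp (-(t : ℂ) • X))ᴴ * (g * NormedSpace.exp (-(t : ℂ) • X)) =
        (g * NormedSpace.exp (-(t : ℂ) • X)) * (g * NormedSpace.exp (-(t : ℂ) • X))ᴴ := by
  intro t _
  have hsa : IsSelfAdjoint X := hX.isSelfAdjoint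
  have hg : IsStarNormal g := ⟨hnormal⟩
  have hXg : Commute X g := by
    have h2X : ((2 : ℂ) • X).IsHermitian := ((IsSelfAdjoint.ofNat 2).smul hsa).isHermitian
    refine (Commute.smul_left_iff₀ two_ne_zero).mp (h2X.commute_of_exp_commute ?_)
    rw [← hgX]
    exact hg.star_comm_self.mul_left (.refl g)
  have hXg' : Commute X (star g) := hsa.star_eq ▸ hXg.star_star
  have hE : IsSelfAdjoint (NormedSpace.exp (-(t : ℂ) • X)) :=
    ((show IsSelfAdjoint (t : ℂ) from Complex.conj_ofReal t).neg.smul hsa).exp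
  exact (hg.mul_of_commute_isSelfAdjoint hE (hXg.smul_left _).exp_left.symm
    (hXg'.smul_left _).exp_left.symm).star_comm_self.eq

/-- If `g ∈ GL(n,ℂ)` is normal, then the whole polar-retraction path
`t ↦ f_t(g) = g * exp(-tX)` consists of normal matrices. -/
theorem polar_retraction_preserves_normal (n : ℕ)
    (g X : Matrix (Fin n) (Fin n) ℂ)
    (hg : IsUnit g) (hnormal : gᴴ * g = g * gᴴ)
    (hX : X.IsHermitian) (hgX : gᴴ * g = NormedSpace.exp ((2 : ℂ) • X)) :
    ∀ t ∈ Set.Icc (0:ℝ) 1,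
      (g * NormedSpace.exp (-(t : ℂ) • X))ᴴ * (g * NormedSpace.exp (-(t : ℂ) • X)) =
        (g * NormedSpace.exp (-(t : ℂ) • X)) * (g * NormedSpace.exp (-(t : ℂ) • X))ᴴ :=
  polar_retraction_preserves_normal_general n g X hnormal hX hgX
end

section
/- Let K act by conjugation on G where K ⊆ G are topological groups, and suppose H : [0,1] × G → G is a K-equivariant strong deformation retraction of G onto K. Then the induced map on the diagonal conjugation quotients gives a strong deformation retraction of G^r/K onto K^r/K. -/
/-!
Because each `H t` commutes with conjugation by `K`, applying it coordinatewise descends to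
`G^r/K`; the time parameter is clamped into `[0,1]`, where equivariance holds, so that the descended
homotopy is defined for all real times. Continuity descends since the product of the quotient map
`G^r → G^r/K` with the locally compact factor `ℝ` is again a quotient map.
-/

/-- The setoid on `G^r` identifying tuples simultaneously conjugate by an element of `K`. -/
def conjKSetoid (G : Type*) [Group G] (K : Subgroup G) (r : ℕ) : Setoid (Fin r → G) :=
  ⟨fun x y => ∃ k ∈ K, ∀ i, y i = k * x i * k⁻¹, by
    constructor
    · intro x; exact ⟨1, K.one_mem, by simp⟩
    · rintro x y ⟨k, hkK, hk⟩
      exact ⟨k⁻¹, K.inv_mem hkK, fun i => by simp [hk i, mul_assoc]⟩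
    · rintro x y z ⟨k, hkK, hk⟩ ⟨k', hk'K, hk'⟩
      exact ⟨k' * k, K.mul_mem hk'K hkK, fun i => by simp [hk' i, hk i, mul_assoc]⟩⟩

open Set

section ConjQuotient

variable {G : Type*} [Group G] (K : Subgroup G) (r : ℕ)

def conjQuotientMap (f : G → G) (hf : ∀ k ∈ K, ∀ g, f (k * g * k⁻¹) = k * f g * k⁻¹) :
    Quotient (conjKSetoid G K r) → Quotient (conjKSetoid G K r) :=
  Quotient.map (f ∘ ·) fun _ _ ⟨k, hk, hxy⟩ => ⟨k, hk, fun i => by simp [hxy i, hf k hk]⟩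

@[simp]
theorem conjQuotientMap_mk (f : G → G) (hf : ∀ k ∈ K, ∀ g, f (k * g * k⁻¹) = k * f g * k⁻¹)
    (x : Fin r → G) :
    conjQuotientMap K r f hf (Quotient.mk _ x) = Quotient.mk _ (f ∘ x) :=
  rfl

theorem continuous_conjQuotientMap_uncurry [TopologicalSpace G] {T : Type*} [TopologicalSpace T]
    [LocallyCompactSpace T] (f : T → G → G)
    (hf : ∀ t, ∀ k ∈ K, ∀ g, f t (k * g * k⁻¹) = k * f t g * k⁻¹)
    (hcont : Continuous fun p : T × G => f p.1 p.2) :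
    Continuous fun p : T × Quotient (conjKSetoid G K r) =>
      conjQuotientMap K r (f p.1) (hf p.1) p.2 :=
  isQuotientMap_quotient_mk'.continuous_lift_prod_right <| continuous_quotient_mk'.comp <|
    continuous_pi fun i => hcont.comp <|
      continuous_fst.prodMk <| (continuous_apply i).comp continuous_snd

end ConjQuotient

theorem induced_sdr_on_conjugation_quotient_general
    (G : Type*) [Group G] [TopologicalSpace G]
    (K : Subgroup G) (r : ℕ) (H : ℝ × G → G)
    (Hcont : ContinuousOn H (Set.Icc (0:ℝ) 1 ×ˢ Set.univ))
    (H0 : ∀ g, H (0, g) = g)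
    (H1 : ∀ g, H (1, g) ∈ K)
    (Hfix : ∀ t ∈ Set.Icc (0:ℝ) 1, ∀ k ∈ K, H (t, k) = k)
    (Heq : ∀ t ∈ Set.Icc (0:ℝ) 1, ∀ k ∈ K, ∀ g,
      H (t, k * g * k⁻¹) = k * H (t, g) * k⁻¹) :
    ∃ H' : ℝ × Quotient (conjKSetoid G K r) → Quotient (conjKSetoid G K r),
      (∀ t ∈ Set.Icc (0:ℝ) 1, ∀ x : Fin r → G,
        H' (t, Quotient.mk (conjKSetoid G K r) x) =
          Quotient.mk (conjKSetoid G K r) (fun i => H (t, x i))) ∧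
      ContinuousOn H' (Set.Icc (0:ℝ) 1 ×ˢ Set.univ) ∧
      (∀ q, H' (0, q) = q) ∧
      (∀ q, H' (1, q) ∈ {q' | ∃ x : Fin r → G, (∀ i, x i ∈ K) ∧
        q' = Quotient.mk (conjKSetoid G K r) x}) ∧
      (∀ t ∈ Set.Icc (0:ℝ) 1, ∀ q ∈ {q' | ∃ x : Fin r → G, (∀ i, x i ∈ K) ∧
        q' = Quotient.mk (conjKSetoid G K r) x}, H' (t, q) = q) := by
  let f : ℝ → G → G := fun t g => H (projIcc 0 1 zero_le_one t, g)
  have hf (t : ℝ) : ∀ k ∈ K, ∀ g, f t (k * g * k⁻¹) = k * f t g * k⁻¹ :=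
    Heq _ (projIcc 0 1 zero_le_one t).2
  let H' := fun p : ℝ × Quotient (conjKSetoid G K r) => conjQuotientMap K r (f p.1) (hf p.1) p.2
  have H'_mk {t : ℝ} (ht : t ∈ Icc (0 : ℝ) 1) (x : Fin r → G) :
      H' (t, Quotient.mk _ x) = Quotient.mk _ (fun i => H (t, x i)) := by
    simp [H', f, projIcc_of_mem _ ht, Function.comp_def]
  refine ⟨H', fun t ht x => H'_mk ht x, ?_, ?_, ?_, ?_⟩
  · refine (continuous_conjQuotientMap_uncurry K r f hf ?_).continuousOn
    exact Hcont.comp_continuous ((continuous_subtype_val.comp continuous_projIcc).prodMap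
      continuous_id) fun p => ⟨(projIcc 0 1 zero_le_one p.1).2, trivial⟩
  · refine Quotient.ind fun x => ?_
    simp [H'_mk (left_mem_Icc.2 zero_le_one), H0]
  · refine Quotient.ind fun x => ?_
    exact ⟨_, fun i => H1 (x i), H'_mk (right_mem_Icc.2 zero_le_one) x⟩
  · rintro t ht _ ⟨x, hx, rfl⟩
    simp [H'_mk ht, Hfix t ht _ (hx _)]

/-- A `K`-equivariant strong deformation retraction of `G` onto a subgroup `K` induces a
strong deformation retraction of `G^r/K` onto (the image of) `K^r/K`, where `K` acts by
diagonal conjugation. -/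
theorem induced_sdr_on_conjugation_quotient
    (G : Type*) [Group G] [TopologicalSpace G] [IsTopologicalGroup G]
    (K : Subgroup G) (r : ℕ) (H : ℝ × G → G)
    (Hcont : ContinuousOn H (Set.Icc (0:ℝ) 1 ×ˢ Set.univ))
    (H0 : ∀ g, H (0, g) = g)
    (H1 : ∀ g, H (1, g) ∈ K)
    (Hfix : ∀ t ∈ Set.Icc (0:ℝ) 1, ∀ k ∈ K, H (t, k) = k)
    (Heq : ∀ t ∈ Set.Icc (0:ℝ) 1, ∀ k ∈ K, ∀ g,
      H (t, k * g * k⁻¹) = k * H (t, g) * k⁻¹) :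
    ∃ H' : ℝ × Quotient (conjKSetoid G K r) → Quotient (conjKSetoid G K r),
      (∀ t ∈ Set.Icc (0:ℝ) 1, ∀ x : Fin r → G,
        H' (t, Quotient.mk (conjKSetoid G K r) x) =
          Quotient.mk (conjKSetoid G K r) (fun i => H (t, x i))) ∧
      ContinuousOn H' (Set.Icc (0:ℝ) 1 ×ˢ Set.univ) ∧
      (∀ q, H' (0, q) = q) ∧
      (∀ q, H' (1, q) ∈ {q' | ∃ x : Fin r → G, (∀ i, x i ∈ K) ∧
        q' = Quotient.mk (conjKSetoid G K r) x}) ∧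
      (∀ t ∈ Set.Icc (0:ℝ) 1, ∀ q ∈ {q' | ∃ x : Fin r → G, (∀ i, x i ∈ K) ∧
        q' = Quotient.mk (conjKSetoid G K r) x}, H' (t, q) = q) :=
  induced_sdr_on_conjugation_quotient_general G K r H Hcont H0 H1 Hfix Heq
end

section
/- A tuple (g₁,…,g_r) ∈ GL(n,ℂ)^r is a minimal vector for the conjugation action of GL(n,ℂ) on (ℂ^{n×n})^r with the norm ‖(X₁,…,X_r)‖² = Σᵢ tr(Xᵢ* Xᵢ) if and only if Σᵢ gᵢ* gᵢ = Σᵢ gᵢ gᵢ*. -/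
/-!
Write `μ(X) = ∑ Xᵢ Xᵢᴴ - ∑ Xᵢᴴ Xᵢ`. If `hᴴ h = u diag(p) uᴴ` with `u` unitary and `m = uᴴ X u`,
then `‖h X h⁻¹‖² = ∑ (p_a / p_b) |m_ab|²`, while `∑ (ℓ_a - ℓ_b) |m_ab|² = ∑ ℓ_a μ(m)_aa` for every
real `ℓ`. If `μ(X) = 0` then `μ(m) = uᴴ μ(X) u = 0`, and `p_a / p_b ≥ 1 + log p_a - log p_b` gives
`‖h X h⁻¹‖² ≥ ‖X‖²`. Conversely, diagonalize `μ(X) = u diag(d) uᴴ` and move along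
`h_t = diag(e^{t d / 2}) uᴴ`: the squared norm `∑ e^{(d_a - d_b) t} |m_ab|²` is minimal at `t = 0`,
so its derivative there, `∑ (d_a - d_b) |m_ab|² = ∑ d_a²`, vanishes and `μ(X) = 0`.
-/

open Matrix

namespace Matrix

variable {m n : Type*}

lemma re_mul_conjTranspose_apply_self [Fintype n] (X : Matrix m n ℂ) (a : m) :
    ((X * Xᴴ) a a).re = ∑ b, Complex.normSq (X a b) := by
  simp only [mul_apply, conjTranspose_apply, Complex.re_sum, Complex.star_def, Complex.mul_conj,
    Complex.ofReal_re]

lemma re_conjTranspose_mul_apply_self [Fintype m] (X : Matrix m n ℂ) (b : n) :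
    ((Xᴴ * X) b b).re = ∑ a, Complex.normSq (X a b) := by
  simp only [mul_apply, conjTranspose_apply, Complex.re_sum, Complex.star_def,
    ← Complex.normSq_eq_conj_mul_self, Complex.ofReal_re]

variable [Fintype m] [Fintype n] [DecidableEq m] [DecidableEq n]

lemma re_trace_conjTranspose_mul_diagonal_mul_mul_diagonal (X : Matrix m n ℂ) (p : m → ℝ)
    (q : n → ℝ) :
    (Xᴴ * diagonal (fun a => (p a : ℂ)) * X * diagonal (fun b => (q b : ℂ))).trace.re =
      ∑ a, ∑ b, p a * q b * Complex.normSq (X a b) := by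
  simp only [trace, diag_apply, mul_apply, diagonal_apply, mul_ite, mul_zero,
    Finset.sum_ite_eq', Finset.mem_univ, if_true, Finset.sum_mul, Complex.re_sum]
  rw [Finset.sum_comm]
  refine Finset.sum_congr rfl fun a _ => Finset.sum_congr rfl fun b _ => ?_
  rw [conjTranspose_apply, Complex.star_def, mul_right_comm _ _ (X a b), mul_comm _ (X a b),
    Complex.mul_conj, ← Complex.ofReal_mul, ← Complex.ofReal_mul, Complex.ofReal_re]
  ring

lemma trace_conjTranspose_mul_self_conj {R : Type*} [CommRing R] [StarRing R]
    (h X : Matrix n n R) :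
    ((h * X * h⁻¹)ᴴ * (h * X * h⁻¹)).trace = (Xᴴ * (hᴴ * h) * X * (hᴴ * h)⁻¹).trace := by
  rw [mul_inv_rev, ← conjTranspose_nonsing_inv]
  simp only [conjTranspose_mul, Matrix.mul_assoc]
  rw [trace_mul_comm]
  simp only [Matrix.mul_assoc]

lemma IsHermitian.eq_mul_diagonal_mul_conjTranspose {A : Matrix n n ℂ} (hA : A.IsHermitian) :
    A = (hA.eigenvectorUnitary : Matrix n n ℂ) * diagonal (fun a => (hA.eigenvalues a : ℂ)) *
      (hA.eigenvectorUnitary : Matrix n n ℂ)ᴴ :=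
  hA.spectral_theorem

lemma re_trace_conjTranspose_mul_self_conj {h u : Matrix n n ℂ} (hu : u ∈ unitaryGroup n ℂ)
    {p : n → ℝ} (hp : ∀ a, p a ≠ 0) (hP : hᴴ * h = u * diagonal (fun a => (p a : ℂ)) * uᴴ)
    (X : Matrix n n ℂ) :
    ((h * X * h⁻¹)ᴴ * (h * X * h⁻¹)).trace.re =
      ∑ a, ∑ b, p a / p b * Complex.normSq ((uᴴ * X * u) a b) := by
  set D := diagonal (fun a => (p a : ℂ))
  set D' := diagonal (fun a => (((p a)⁻¹ : ℝ) : ℂ))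
  have huu : uᴴ * u = 1 := mem_unitaryGroup_iff'.mp hu
  have huu' : u * uᴴ = 1 := mem_unitaryGroup_iff.mp hu
  have hDD' : D * D' = 1 := by
    rw [diagonal_mul_diagonal, ← diagonal_one]
    congr 1
    funext a
    rw [← Complex.ofReal_mul, mul_inv_cancel₀ (hp a), Complex.ofReal_one]
  have hPinv : (hᴴ * h)⁻¹ = u * D' * uᴴ := by
    refine inv_eq_right_inv ?_
    calc hᴴ * h * (u * D' * uᴴ) = u * (D * (uᴴ * u) * D') * uᴴ := by
          simp only [hP, Matrix.mul_assoc]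
      _ = 1 := by rw [huu, Matrix.mul_one, hDD', Matrix.mul_one, huu']
  have hcycle : (Xᴴ * (hᴴ * h) * X * (hᴴ * h)⁻¹).trace =
      ((uᴴ * X * u)ᴴ * D * (uᴴ * X * u) * D').trace := by
    calc (Xᴴ * (hᴴ * h) * X * (hᴴ * h)⁻¹).trace
        = ((Xᴴ * u * D * uᴴ * X * u * D') * uᴴ).trace := by
          rw [hPinv, hP]; simp only [Matrix.mul_assoc]
      _ = (uᴴ * (Xᴴ * u * D * uᴴ * X * u * D')).trace := trace_mul_comm _ _
      _ = _ := by simp only [conjTranspose_mul, conjTranspose_conjTranspose, Matrix.mul_assoc]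
  rw [trace_conjTranspose_mul_self_conj, hcycle,
    re_trace_conjTranspose_mul_diagonal_mul_mul_diagonal]
  simp only [div_eq_mul_inv]

end Matrix

lemma sum_mul_eq_zero_of_forall_le_sum_exp_mul {κ : Type*} (s : Finset κ) (c μ : κ → ℝ)
    (h : ∀ t, ∑ k ∈ s, c k ≤ ∑ k ∈ s, Real.exp (μ k * t) * c k) : ∑ k ∈ s, μ k * c k = 0 := by
  have hderiv : HasDerivAt (fun t => ∑ k ∈ s, Real.exp (μ k * t) * c k) (∑ k ∈ s, μ k * c k) 0 := by
    refine HasDerivAt.fun_sum fun k _ => ?_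
    simpa using ((hasDerivAt_id (0 : ℝ)).const_mul (μ k)).exp.mul_const (c k)
  refine IsLocalMin.hasDerivAt_eq_zero (Filter.Eventually.of_forall fun t => ?_) hderiv
  simpa using h t

open scoped ComplexOrder

namespace KempfNess

variable {n ι : Type*} [Fintype n] [Fintype ι]

def sqNorm (X : ι → Matrix n n ℂ) : ℝ := (∑ i, ((X i)ᴴ * X i).trace).re

/-- The moment map of the conjugation action, up to normalization. -/
def momentMap (X : ι → Matrix n n ℂ) : Matrix n n ℂ := ∑ i, X i * (X i)ᴴ - ∑ i, (X i)ᴴ * X i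

lemma momentMap_isHermitian (X : ι → Matrix n n ℂ) : (momentMap X).IsHermitian := by
  simp only [IsHermitian, momentMap, conjTranspose_sub, conjTranspose_sum, conjTranspose_mul,
    conjTranspose_conjTranspose]

lemma sum_sub_mul_normSq_eq (ℓ : n → ℝ) (X : ι → Matrix n n ℂ) :
    ∑ i, ∑ a, ∑ b, (ℓ a - ℓ b) * Complex.normSq (X i a b) = ∑ a, ℓ a * (momentMap X a a).re := by
  simp only [momentMap, Matrix.sub_apply, Complex.sub_re, Matrix.sum_apply, Complex.re_sum,
    re_mul_conjTranspose_apply_self, re_conjTranspose_mul_apply_self, mul_sub, sub_mul,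
    Finset.sum_sub_distrib, Finset.mul_sum]
  congr 1
  · exact Finset.sum_comm
  · conv_rhs => rw [Finset.sum_comm]
    exact Finset.sum_congr rfl fun i _ => Finset.sum_comm

variable [DecidableEq n]

lemma momentMap_conj_unitary {u : Matrix n n ℂ} (hu : u ∈ unitaryGroup n ℂ)
    (X : ι → Matrix n n ℂ) :
    momentMap (fun i => uᴴ * X i * u) = uᴴ * momentMap X * u := by
  have huu : u * uᴴ = 1 := mem_unitaryGroup_iff.mp hu
  have hcancel : ∀ Y : Matrix n n ℂ, u * (uᴴ * Y) = Y := fun Y => by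
    rw [← Matrix.mul_assoc, huu, Matrix.one_mul]
  simp only [momentMap, Matrix.mul_sub, Matrix.sub_mul, Finset.mul_sum, Finset.sum_mul,
    conjTranspose_mul, conjTranspose_conjTranspose, Matrix.mul_assoc, hcancel]

lemma sqNorm_conj_eq_sum {h u : Matrix n n ℂ} (hu : u ∈ unitaryGroup n ℂ) {p : n → ℝ}
    (hp : ∀ a, p a ≠ 0) (hP : hᴴ * h = u * diagonal (fun a => (p a : ℂ)) * uᴴ)
    (X : ι → Matrix n n ℂ) :
    sqNorm (fun i => h * X i * h⁻¹) =
      ∑ i, ∑ a, ∑ b, p a / p b * Complex.normSq ((uᴴ * X i * u) a b) := by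
  simp only [sqNorm, Complex.re_sum, re_trace_conjTranspose_mul_self_conj hu hp hP]

lemma sqNorm_eq_sum {u : Matrix n n ℂ} (hu : u ∈ unitaryGroup n ℂ) (X : ι → Matrix n n ℂ) :
    sqNorm X = ∑ i, ∑ a, ∑ b, Complex.normSq ((uᴴ * X i * u) a b) := by
  have h1 : (1 : Matrix n n ℂ)ᴴ * 1 = u * diagonal (fun _ => ((1 : ℝ) : ℂ)) * uᴴ := by
    rw [conjTranspose_one, Matrix.one_mul, Complex.ofReal_one, diagonal_one, Matrix.mul_one]
    exact (mem_unitaryGroup_iff.mp hu).symm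
  simpa using sqNorm_conj_eq_sum hu (fun _ => one_ne_zero) h1 X

lemma sqNorm_le_sqNorm_conj_of_momentMap_eq_zero {X : ι → Matrix n n ℂ} (hX : momentMap X = 0)
    {h : Matrix n n ℂ} (hh : IsUnit h) : sqNorm X ≤ sqNorm (fun i => h * X i * h⁻¹) := by
  have hP : (hᴴ * h).PosDef := PosDef.conjTranspose_mul_self h (mulVec_injective_iff_isUnit.mpr hh)
  set u := (hP.isHermitian.eigenvectorUnitary : Matrix n n ℂ)
  set p := hP.isHermitian.eigenvalues
  have hu : u ∈ unitaryGroup n ℂ := hP.isHermitian.eigenvectorUnitary.2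
  have hpos : ∀ a, 0 < p a := hP.eigenvalues_pos
  have hμ : momentMap (fun i => uᴴ * X i * u) = 0 := by
    rw [momentMap_conj_unitary hu, hX, Matrix.mul_zero, Matrix.zero_mul]
  rw [sqNorm_eq_sum hu, sqNorm_conj_eq_sum hu (fun a => (hpos a).ne')
    hP.isHermitian.eq_mul_diagonal_mul_conjTranspose]
  calc ∑ i, ∑ a, ∑ b, Complex.normSq ((uᴴ * X i * u) a b)
      = ∑ i, ∑ a, ∑ b, (1 + (Real.log (p a) - Real.log (p b))) *
          Complex.normSq ((uᴴ * X i * u) a b) := by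
        simp only [add_mul, one_mul, Finset.sum_add_distrib, sum_sub_mul_normSq_eq, hμ,
          Matrix.zero_apply, Complex.zero_re, mul_zero, Finset.sum_const_zero, add_zero]
    _ ≤ ∑ i, ∑ a, ∑ b, p a / p b * Complex.normSq ((uᴴ * X i * u) a b) := by
        gcongr with i _ a _ b _
        · exact Complex.normSq_nonneg _
        rw [← Real.log_div (hpos a).ne' (hpos b).ne']
        linarith [Real.log_le_sub_one_of_pos (div_pos (hpos a) (hpos b))]

lemma isUnit_diagonal_exp_mul_conjTranspose {u : Matrix n n ℂ} (hu : u ∈ unitaryGroup n ℂ)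
    (d : n → ℝ) (t : ℝ) : IsUnit (diagonal (fun a => (Real.exp (t * d a / 2) : ℂ)) * uᴴ) :=
  (isUnit_diagonal.mpr (Pi.isUnit_iff.mpr fun _ =>
    (Complex.ofReal_ne_zero.mpr (Real.exp_pos _).ne').isUnit)).mul
    (Unitary.isUnit_coe (U := star ⟨u, hu⟩))

lemma sqNorm_conj_diagonal_exp_mul_conjTranspose {u : Matrix n n ℂ} (hu : u ∈ unitaryGroup n ℂ)
    (d : n → ℝ) (t : ℝ) (X : ι → Matrix n n ℂ) :
    sqNorm (fun i => diagonal (fun a => (Real.exp (t * d a / 2) : ℂ)) * uᴴ * X i *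
        (diagonal (fun a => (Real.exp (t * d a / 2) : ℂ)) * uᴴ)⁻¹) =
      ∑ i, ∑ a, ∑ b, Real.exp ((d a - d b) * t) * Complex.normSq ((uᴴ * X i * u) a b) := by
  set D := diagonal (fun a => (Real.exp (t * d a / 2) : ℂ))
  have hDD : Dᴴ * D = diagonal (fun a => (Real.exp (t * d a) : ℂ)) := by
    rw [diagonal_conjTranspose, diagonal_mul_diagonal]
    congr 1
    funext a
    rw [Pi.star_apply, Complex.star_def, Complex.conj_ofReal, ← Complex.ofReal_mul,
      ← Real.exp_add, add_halves]
  have hP : (D * uᴴ)ᴴ * (D * uᴴ) = u * diagonal (fun a => (Real.exp (t * d a) : ℂ)) * uᴴ := by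
    rw [conjTranspose_mul, conjTranspose_conjTranspose, ← hDD]
    simp only [Matrix.mul_assoc]
  rw [sqNorm_conj_eq_sum hu (fun a => (Real.exp_pos _).ne') hP]
  simp only [← Real.exp_sub, ← sub_mul, mul_comm t]

lemma momentMap_eq_zero_of_forall_sqNorm_le {X : ι → Matrix n n ℂ}
    (hX : ∀ h : Matrix n n ℂ, IsUnit h → sqNorm X ≤ sqNorm (fun i => h * X i * h⁻¹)) :
    momentMap X = 0 := by
  have hA := momentMap_isHermitian X
  set u := (hA.eigenvectorUnitary : Matrix n n ℂ)
  set d := hA.eigenvalues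
  have hu : u ∈ unitaryGroup n ℂ := hA.eigenvectorUnitary.2
  have hspec : momentMap X = u * diagonal (fun a => (d a : ℂ)) * uᴴ :=
    hA.eq_mul_diagonal_mul_conjTranspose
  have hdiag : momentMap (fun i => uᴴ * X i * u) = diagonal (fun a => (d a : ℂ)) := by
    have huu : uᴴ * u = 1 := mem_unitaryGroup_iff'.mp hu
    rw [momentMap_conj_unitary hu, hspec]
    simp only [← Matrix.mul_assoc, huu, Matrix.one_mul]
    simp only [Matrix.mul_assoc, huu, Matrix.mul_one]
  have hcurve : ∀ t : ℝ, sqNorm X ≤ ∑ i, ∑ a, ∑ b,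
      Real.exp ((d a - d b) * t) * Complex.normSq ((uᴴ * X i * u) a b) := fun t =>
    (hX _ (isUnit_diagonal_exp_mul_conjTranspose hu d t)).trans_eq
      (sqNorm_conj_diagonal_exp_mul_conjTranspose hu d t X)
  have hcrit : ∑ i, ∑ a, ∑ b, (d a - d b) * Complex.normSq ((uᴴ * X i * u) a b) = 0 := by
    have hprod := sum_mul_eq_zero_of_forall_le_sum_exp_mul Finset.univ
      (fun k : ι × n × n => Complex.normSq ((uᴴ * X k.1 * u) k.2.1 k.2.2))
      (fun k => d k.2.1 - d k.2.2) (fun t => by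
        simpa only [Fintype.sum_prod_type, ← sqNorm_eq_sum hu] using hcurve t)
    simpa only [Fintype.sum_prod_type] using hprod
  have hd : ∀ a, d a = 0 := by
    rw [sum_sub_mul_normSq_eq, hdiag] at hcrit
    simp only [diagonal_apply_eq, Complex.ofReal_re] at hcrit
    have hsq := (Finset.sum_eq_zero_iff_of_nonneg fun b _ => mul_self_nonneg (d b)).mp hcrit
    exact fun a => mul_self_eq_zero.mp (hsq a (Finset.mem_univ a))
  rw [hspec]
  simp only [hd, Complex.ofReal_zero, diagonal_zero, Matrix.mul_zero, Matrix.zero_mul]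

end KempfNess

theorem minimal_vector_iff_kempf_ness_general (n r : ℕ)
    (g : Fin r → Matrix (Fin n) (Fin n) ℂ) :
    (∀ h : Matrix (Fin n) (Fin n) ℂ, IsUnit h →
      (∑ i, ((g i)ᴴ * g i).trace).re ≤
        (∑ i, ((h * g i * h⁻¹)ᴴ * (h * g i * h⁻¹)).trace).re) ↔
      ∑ i, (g i)ᴴ * g i = ∑ i, g i * (g i)ᴴ := by
  rw [eq_comm, ← sub_eq_zero]
  exact ⟨KempfNess.momentMap_eq_zero_of_forall_sqNorm_le,
    fun hg _ hh => KempfNess.sqNorm_le_sqNorm_conj_of_momentMap_eq_zero hg hh⟩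

/-- A tuple of invertible matrices is a minimal vector for the simultaneous
conjugation action of `GL(n,ℂ)` (with the Frobenius norm) iff `∑ gᵢᴴ gᵢ = ∑ gᵢ gᵢᴴ`. -/
theorem minimal_vector_iff_kempf_ness (n r : ℕ)
    (g : Fin r → Matrix (Fin n) (Fin n) ℂ) (hg : ∀ i, IsUnit (g i)) :
    (∀ h : Matrix (Fin n) (Fin n) ℂ, IsUnit h →
      (∑ i, ((g i)ᴴ * g i).trace).re ≤
        (∑ i, ((h * g i * h⁻¹)ᴴ * (h * g i * h⁻¹)).trace).re) ↔
      ∑ i, (g i)ᴴ * g i = ∑ i, g i * (g i)ᴴ :=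
  minimal_vector_iff_kempf_ness_general n r g
end

section
/- The set of normal invertible matrices {g ∈ GL(n,ℂ) : g* g = g g*} deformation retracts onto U(n) via the polar retraction, and hence U(n) is a strong deformation retract of the normal invertible matrices. -/
/-!
For invertible `g`, `g⋆g` is strictly positive, so `X = ½ log (g⋆g)` is the unique self-adjoint
element with `g⋆g = exp (2X)`, and `f_t(g) = g exp (-tX)` depends continuously on `(t, g)` because
the continuous functional calculus `log` is continuous on invertible self-adjoint elements.
The elements `exp (sX)` are self-adjoint and commute with one another, so
`f_t(g)⋆ f_t(g) = exp ((2 - 2t) X)`, which is `1` at `t = 1`. A normal `g` commutes with `g⋆g`,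
hence with `exp (-tX)`, and then `f_t(g)` is normal too. The argument works in any unital
C⋆-algebra.
-/

open Matrix NormedSpace CFC

section ExpSmul

variable {𝔸 : Type*} [NormedRing 𝔸] [NormedAlgebra ℝ 𝔸] [CompleteSpace 𝔸]

theorem NormedSpace.exp_smul_mul_exp_smul (a : 𝔸) (s u : ℝ) :
    exp (s • a) * exp (u • a) = exp ((s + u) • a) := by
  let +nondep : NormedAlgebra ℚ 𝔸 := .restrictScalars ℚ ℝ 𝔸
  rw [add_smul, exp_add_of_commute (((Commute.refl a).smul_left s).smul_right u)]

end ExpSmul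

variable {A : Type*} [CStarAlgebra A]

/-- `f_t(g) = g exp (-tX)` with `X = ½ log (g⋆g)`, i.e. `g (g⋆g)^{-t/2}` for invertible `g`. -/
noncomputable def polarRetraction (p : ℝ × A) : A :=
  p.2 * exp (-(p.1 / 2) • log (star p.2 * p.2))

theorem polarRetraction_eq_mul_exp_smul {g X : A} (hX : IsSelfAdjoint X)
    (h : star g * g = exp ((2 : ℂ) • X)) (t : ℝ) :
    polarRetraction (t, g) = g * exp (-(t : ℂ) • X) := by
  have hlog : log (star g * g) = (2 : ℝ) • X := by
    rw [h, ← log_exp ((2 : ℝ) • X) (.smul (star_trivial _) hX)]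
    norm_cast
  rw [polarRetraction, hlog, smul_smul, show -(t / 2) * 2 = -t by ring, ← Complex.coe_smul]
  push_cast
  rfl

theorem polarRetraction_zero (g : A) : polarRetraction (0, g) = g := by
  simp [polarRetraction]

theorem polarRetraction_of_star_mul_self_eq_one {k : A} (hk : star k * k = 1) (t : ℝ) :
    polarRetraction (t, k) = k := by
  simp [polarRetraction, hk]

theorem isUnit_polarRetraction {g : A} (hg : IsUnit g) (t : ℝ) :
    IsUnit (polarRetraction (t, g)) := by
  let +nondep : NormedAlgebra ℚ A := .restrictScalars ℚ ℂ A
  exact hg.mul (isUnit_exp _)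

theorem continuousOn_polarRetraction :
    ContinuousOn (polarRetraction (A := A)) {p | IsUnit p.2} := by
  let +nondep : NormedAlgebra ℚ A := .restrictScalars ℚ ℂ A
  have hlog : ContinuousOn (fun p : ℝ × A => log (star p.2 * p.2)) {p | IsUnit p.2} :=
    continuousOn_log.comp (by fun_prop) fun p hp => ⟨.star_mul_self p.2, hp.star.mul hp⟩
  exact continuous_snd.continuousOn.mul
    (exp_continuous.comp_continuousOn ((continuous_fst.div_const 2).neg.continuousOn.smul hlog))

theorem Commute.exp_smul_log {a b : A} (h : Commute a b) (s : ℝ) :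
    Commute (NormedSpace.exp (s • log a)) b :=
  ((h.cfc_real Real.log).smul_left s).exp_left

theorem IsStarNormal.polarRetraction {g : A} [IsStarNormal g] (t : ℝ) :
    IsStarNormal (polarRetraction (t, g)) := by
  have hgg : Commute g (star g) := (star_comm_self (x := g)).symm
  set E := exp (-(t / 2) • log (star g * g))
  have hE : IsSelfAdjoint E := ((IsSelfAdjoint.all _).smul .log).exp
  have hEg : Commute E g := (hgg.symm.mul_left (.refl g)).exp_smul_log _
  have hEg' : Commute E (star g) := ((Commute.refl _).mul_left hgg).exp_smul_log _
  refine ⟨?_⟩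
  change Commute (star (g * E)) (g * E)
  rw [star_mul, hE.star_eq]
  exact .mul_right (.mul_left hEg hgg.symm) (.mul_left (.refl E) hEg'.symm)

section Order

variable [PartialOrder A] [StarOrderedRing A]

theorem exp_log_star_mul_self {g : A} (hg : IsUnit g) : exp (log (star g * g)) = star g * g :=
  exp_log _ ((hg.star.mul hg).isStrictlyPositive (star_mul_self_nonneg g))

theorem star_polarRetraction_mul_self {g : A} (hg : IsUnit g) (t : ℝ) :
    star (polarRetraction (t, g)) * polarRetraction (t, g) =
      exp ((1 - t) • log (star g * g)) := by
  dsimp only [polarRetraction]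
  set L := log (star g * g)
  have hE : IsSelfAdjoint (exp (-(t / 2) • L)) := ((IsSelfAdjoint.all _).smul .log).exp
  calc star (g * exp (-(t / 2) • L)) * (g * exp (-(t / 2) • L))
      = exp (-(t / 2) • L) * exp ((1 : ℝ) • L) * exp (-(t / 2) • L) := by
        rw [star_mul, hE.star_eq, one_smul, exp_log_star_mul_self hg]
        simp only [mul_assoc]
    _ = exp ((1 - t) • L) := by
        rw [exp_smul_mul_exp_smul, exp_smul_mul_exp_smul]
        ring_nf

end Order

open scoped Matrix.Norms.L2Operator MatrixOrder

/-- The set of normal invertible matrices strongly deformation retracts onto `U(n)` via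
the polar retraction `f_t(g) = g * exp (-tX)` (where `gᴴ g = exp (2X)`, `X` Hermitian). -/
theorem normal_matrices_deformation_retract_unitary (n : ℕ) :
    ∃ H : ℝ × Matrix (Fin n) (Fin n) ℂ → Matrix (Fin n) (Fin n) ℂ,
      (∀ (g X : Matrix (Fin n) (Fin n) ℂ), IsUnit g → X.IsHermitian →
          gᴴ * g = NormedSpace.exp ((2 : ℂ) • X) →
          ∀ t : ℝ, H (t, g) = g * NormedSpace.exp (-(t : ℂ) • X)) ∧
      ContinuousOn H (Set.Icc (0:ℝ) 1 ×ˢ {g | IsUnit g ∧ gᴴ * g = g * gᴴ}) ∧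
      (∀ g : Matrix (Fin n) (Fin n) ℂ, IsUnit g ∧ gᴴ * g = g * gᴴ → H (0, g) = g) ∧
      (∀ g : Matrix (Fin n) (Fin n) ℂ, IsUnit g ∧ gᴴ * g = g * gᴴ →
        (H (1, g))ᴴ * H (1, g) = 1) ∧
      (∀ t ∈ Set.Icc (0:ℝ) 1, ∀ g : Matrix (Fin n) (Fin n) ℂ,
        IsUnit g ∧ gᴴ * g = g * gᴴ →
          IsUnit (H (t, g)) ∧ (H (t, g))ᴴ * H (t, g) = H (t, g) * (H (t, g))ᴴ) ∧
      (∀ t ∈ Set.Icc (0:ℝ) 1, ∀ k : Matrix (Fin n) (Fin n) ℂ, kᴴ * k = 1 → H (t, k) = k) := by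
  refine ⟨polarRetraction, fun g X _ hX h t => polarRetraction_eq_mul_exp_smul hX h t,
    continuousOn_polarRetraction.mono fun p hp => hp.2.1, fun g _ => polarRetraction_zero g,
    fun g hg => ?_, fun t _ g hg => ?_,
    fun t _ k hk => polarRetraction_of_star_mul_self_eq_one hk t⟩
  · rw [← star_eq_conjTranspose, star_polarRetraction_mul_self hg.1, sub_self, zero_smul,
      exp_zero]
  · have : IsStarNormal g := ⟨hg.2⟩
    exact ⟨isUnit_polarRetraction hg.1 t, (IsStarNormal.polarRetraction t).star_comm_self⟩
end
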